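/- arXiv:2312.11737 — 2 statements merged into one kernel-verified Lean document; each statement's English description precedes it below -/
import Mathlib

section
/- If A, B are positive semidefinite symmetric matrices in Sym_+^S with B ≪ A (i.e. ker A ⊆ ker B), then ‖√A − √B‖ ≤ (1/√(λ₊(A))) · ‖A − B‖, where λ₊(A) is the smallest strictly positive eigenvalue of A (with the convention λ₊(0) = ∞). -/
open scoped BigOperators ENNReal

/-- Frobenius (Hilbert–Schmidt) norm of a matrix. -/
noncomputable def frobNorm {S T : Type*} [Fintype S] [Fintype T] (A : Matrix S T ℝ) : ℝ :=
  Real.sqrt (∑ s, ∑ t, A s t ^ 2)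

/-- The smallest strictly positive eigenvalue of a matrix, as an extended nonnegative
real; equal to `∞` when there is no strictly positive eigenvalue (e.g. for `A = 0`). -/
noncomputable def lambdaPlus {S : Type*} [Fintype S] (A : Matrix S S ℝ) : ℝ≥0∞ :=
  sInf {l : ℝ≥0∞ | ∃ r : ℝ, 0 < r ∧ l = ENNReal.ofReal r ∧
    ∃ v : S → ℝ, v ≠ 0 ∧ A.mulVec v = r • v}

namespace SqrtDiffAux

variable {S : Type*} [Fintype S] [DecidableEq S]

noncomputable def frobSq (M : Matrix S S ℝ) : ℝ := ∑ i, ∑ j, M i j ^ 2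

omit [DecidableEq S] in
lemma frobSq_nonneg (M : Matrix S S ℝ) : 0 ≤ frobSq M :=
  Finset.sum_nonneg fun _ _ => Finset.sum_nonneg fun _ _ => sq_nonneg _

omit [DecidableEq S] in
lemma frobSq_eq_trace (M : Matrix S S ℝ) : frobSq M = (star M * M).trace := by
  simp only [frobSq, Matrix.trace, Matrix.diag, Matrix.mul_apply, Matrix.star_apply, star_trivial,
    sq]
  exact Finset.sum_comm

lemma frobSq_conj {U V : Matrix S S ℝ} (M : Matrix S S ℝ)
    (hU : U * star U = 1) (hV : V * star V = 1) :
    frobSq (star U * M * V) = frobSq M := by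
  rw [frobSq_eq_trace, frobSq_eq_trace]
  have h1 : star (star U * M * V) * (star U * M * V)
      = star V * (star M * (U * star U) * M) * V := by
    simp only [Matrix.star_mul, star_star, Matrix.mul_assoc]
  rw [h1, hU, Matrix.mul_one, Matrix.trace_mul_cycle, ← Matrix.mul_assoc, hV, Matrix.one_mul]

omit [DecidableEq S] in
lemma frobNorm_eq (M : Matrix S S ℝ) : frobNorm M = Real.sqrt (frobSq M) := rfl

end SqrtDiffAux

open SqrtDiffAux in
/-- If `A`, `B` are positive semidefinite with `B ≪ A` (i.e. `ker A ⊆ ker B`), then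
`‖√A − √B‖ ≤ λ₊(A)^{-1/2} ‖A − B‖` in Frobenius norm, with the convention
`λ₊(0) = ∞` (so `∞^{-1/2} = 0`). -/
theorem sqrt_diff_le_of_absolutelyContinuous
    {S : Type*} [Fintype S] [DecidableEq S] {A B : Matrix S S ℝ}
    (hA : A.PosSemidef) (hB : B.PosSemidef)
    (hBA : ∀ v : S → ℝ, A.mulVec v = 0 → B.mulVec v = 0) :
    ENNReal.ofReal (frobNorm (hA.1.cfc Real.sqrt - hB.1.cfc Real.sqrt))
      ≤ lambdaPlus A ^ (-(1 / 2 : ℝ)) * ENNReal.ofReal (frobNorm (A - B)) := by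
  classical
  set U : Matrix S S ℝ := (hA.1.eigenvectorUnitary : Matrix S S ℝ) with hUdef
  set V : Matrix S S ℝ := (hB.1.eigenvectorUnitary : Matrix S S ℝ) with hVdef
  set d : S → ℝ := hA.1.eigenvalues with hddef
  set e : S → ℝ := hB.1.eigenvalues with hedef
  have hU1 : U * star U = 1 := Matrix.mem_unitaryGroup_iff.mp hA.1.eigenvectorUnitary.2
  have hU2 : star U * U = 1 := Matrix.mem_unitaryGroup_iff'.mp hA.1.eigenvectorUnitary.2
  have hV1 : V * star V = 1 := Matrix.mem_unitaryGroup_iff.mp hB.1.eigenvectorUnitary.2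
  have hV2 : star V * V = 1 := Matrix.mem_unitaryGroup_iff'.mp hB.1.eigenvectorUnitary.2
  have hAspec : A = U * Matrix.diagonal d * star U := by
    have := hA.1.spectral_theorem
    simpa [RCLike.ofReal_real_eq_id] using this
  have hBspec : B = V * Matrix.diagonal e * star V := by
    have := hB.1.spectral_theorem
    simpa [RCLike.ofReal_real_eq_id] using this
  have hAsqrt : hA.1.cfc Real.sqrt = U * Matrix.diagonal (fun i => Real.sqrt (d i)) * star U := by
    rw [Matrix.IsHermitian.cfc, Unitary.conjStarAlgAut_apply]
    rfl
  have hBsqrt : hB.1.cfc Real.sqrt = V * Matrix.diagonal (fun j => Real.sqrt (e j)) * star V := by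
    rw [Matrix.IsHermitian.cfc, Unitary.conjStarAlgAut_apply]
    rfl
  have hdnn : ∀ i, 0 ≤ d i := hA.eigenvalues_nonneg
  have henn : ∀ j, 0 ≤ e j := hB.eigenvalues_nonneg
  set W : Matrix S S ℝ := star U * V with hWdef
  -- conjugation identities
  have conjL : ∀ D : Matrix S S ℝ, star U * (U * D * star U) * V = D * W := by
    intro D
    rw [← Matrix.mul_assoc, ← Matrix.mul_assoc, hU2, Matrix.one_mul, Matrix.mul_assoc]
  have conjR : ∀ E : Matrix S S ℝ, star U * (V * E * star V) * V = W * E := by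
    intro E
    simp only [hWdef, Matrix.mul_assoc, hV2, Matrix.mul_one]
  have hAU : A * U = U * Matrix.diagonal d := by
    conv_lhs => rw [hAspec]
    rw [Matrix.mul_assoc, hU2, Matrix.mul_one]
  have hAcol : ∀ i, A.mulVec (fun k => U k i) = fun k => d i * U k i := by
    intro i
    funext k
    have h1 : A.mulVec (fun m => U m i) k = (A * U) k i := by
      simp [Matrix.mulVec, Matrix.mul_apply, dotProduct]
    rw [h1, hAU, Matrix.mul_diagonal, mul_comm]
  -- entries of the conjugated matrices
  have hXmat : star U * (hA.1.cfc Real.sqrt - hB.1.cfc Real.sqrt) * V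
      = Matrix.diagonal (fun i => Real.sqrt (d i)) * W
        - W * Matrix.diagonal (fun j => Real.sqrt (e j)) := by
    rw [Matrix.mul_sub, Matrix.sub_mul, hAsqrt, hBsqrt, conjL, conjR]
  have hDmat : star U * (A - B) * V
      = Matrix.diagonal d * W - W * Matrix.diagonal e := by
    conv_lhs => rw [hAspec, hBspec]
    rw [Matrix.mul_sub, Matrix.sub_mul, conjL, conjR]
  -- kernel fact : zero rows of W where d i = 0 and e j ≠ 0
  have hWzero : ∀ i j, d i = 0 → e j ≠ 0 → W i j = 0 := by
    intro i j hi hj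
    have hu : A.mulVec (fun k => U k i) = 0 := by
      rw [hAcol i]; funext k; rw [hi, zero_mul]; rfl
    have hb := hBA _ hu
    have hrow : ∀ k, (star U * B) i k = 0 := by
      intro k
      have h2 : (star U * B) i k = B.mulVec (fun m => U m i) k := by
        simp only [Matrix.mul_apply, Matrix.mulVec, dotProduct, Matrix.star_apply,
          star_trivial]
        refine Finset.sum_congr rfl fun m _ => ?_
        show U m i * B m k = B k m * U m i
        rw [← hB.1.apply k m, star_trivial, mul_comm]
      rw [h2, hb]; rfl
    have hBV : star U * B * V = W * Matrix.diagonal e := by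
      conv_lhs => rw [hBspec]
      exact conjR _
    have h3 : (star U * B * V) i j = 0 := by
      rw [Matrix.mul_apply]
      exact Finset.sum_eq_zero fun k _ => by rw [hrow k, zero_mul]
    rw [hBV, Matrix.mul_diagonal] at h3
    exact (mul_eq_zero.mp h3).resolve_right hj
  by_cases hz : ∀ i, d i = 0
  · -- degenerate case : A = 0
    have hd0 : d = 0 := funext hz
    have hA0 : A = 0 := by
      rw [hAspec, hd0]
      rw [show ((0 : S → ℝ)) = fun _ => (0:ℝ) from rfl, Matrix.diagonal_zero,
        Matrix.mul_zero, Matrix.zero_mul]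
    have hBv : ∀ v : S → ℝ, B.mulVec v = 0 := fun v =>
      hBA v (by rw [hA0, Matrix.zero_mulVec])
    have he0 : ∀ j, e j = 0 := by
      intro j
      have h1 : (e j) • ⇑(hB.1.eigenvectorBasis j) = (0 : S → ℝ) := by
        rw [← hB.1.mulVec_eigenvectorBasis j]; exact hBv _
      rcases smul_eq_zero.mp h1 with h | h
      · exact h
      · exact absurd (by ext k; exact congrFun h k)
          (hB.1.eigenvectorBasis.orthonormal.ne_zero j)
    have hX0 : hA.1.cfc Real.sqrt - hB.1.cfc Real.sqrt = 0 := by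
      rw [hAsqrt, hBsqrt, hd0]
      have : (fun j => Real.sqrt (e j)) = fun _ => 0 := by funext j; rw [he0 j, Real.sqrt_zero]
      rw [this]
      simp
    rw [hX0]
    simp [frobNorm]
  · push_neg at hz
    obtain ⟨i₁, hi₁⟩ := hz
    have hPne : (Finset.univ.filter fun i => d i ≠ 0).Nonempty :=
      ⟨i₁, by simp [hi₁]⟩
    obtain ⟨i₀, hi₀mem, hi₀min⟩ :=
      Finset.exists_min_image (Finset.univ.filter fun i => d i ≠ 0) d hPne
    set μ : ℝ := d i₀ with hμdef
    have hi₀ : d i₀ ≠ 0 := (Finset.mem_filter.mp hi₀mem).2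
    have hμpos : 0 < μ := lt_of_le_of_ne (hdnn i₀) (Ne.symm hi₀)
    have hmin : ∀ i, d i ≠ 0 → μ ≤ d i := fun i hi =>
      hi₀min i (Finset.mem_filter.mpr ⟨Finset.mem_univ i, hi⟩)
    -- λ₊(A) ≤ μ
    have hune : (fun k => U k i₀) ≠ 0 := by
      intro h
      have h1 : (star U * U) i₀ i₀ = 0 := by
        rw [Matrix.mul_apply]
        refine Finset.sum_eq_zero fun k _ => ?_
        rw [Matrix.star_apply, star_trivial, congrFun h k]
        simp
      rw [hU2] at h1
      simp at h1
    have hmemb : ENNReal.ofReal μ ∈ {l : ℝ≥0∞ | ∃ r : ℝ, 0 < r ∧ l = ENNReal.ofReal r ∧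
        ∃ v : S → ℝ, v ≠ 0 ∧ A.mulVec v = r • v} := by
      refine ⟨μ, hμpos, rfl, fun k => U k i₀, hune, ?_⟩
      rw [hAcol i₀]
      funext k
      simp [hμdef]
    have hL : lambdaPlus A ≤ ENNReal.ofReal μ := sInf_le hmemb
    -- entrywise inequality
    have hentry : ∀ i j,
        μ * ((Real.sqrt (d i) - Real.sqrt (e j)) * W i j) ^ 2
          ≤ ((d i - e j) * W i j) ^ 2 := by
      intro i j
      by_cases hdi : d i = 0
      · by_cases hej : e j = 0
        · rw [hdi, hej]
          simp [sq_nonneg]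
        · rw [hWzero i j hdi hej]
          simp [sq_nonneg]
      · set a := Real.sqrt (d i) with hadef
        set b := Real.sqrt (e j) with hbdef
        have ha2 : a ^ 2 = d i := Real.sq_sqrt (hdnn i)
        have hb2 : b ^ 2 = e j := Real.sq_sqrt (henn j)
        have ha0 : 0 ≤ a := Real.sqrt_nonneg _
        have hb0 : 0 ≤ b := Real.sqrt_nonneg _
        have hdi' : μ ≤ d i := hmin i hdi
        have hab : μ ≤ (a + b) ^ 2 := by nlinarith
        calc μ * ((a - b) * W i j) ^ 2
            ≤ (a + b) ^ 2 * ((a - b) * W i j) ^ 2 :=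
              mul_le_mul_of_nonneg_right hab (sq_nonneg _)
          _ = ((a ^ 2 - b ^ 2) * W i j) ^ 2 := by ring
          _ = ((d i - e j) * W i j) ^ 2 := by rw [ha2, hb2]
    -- summed inequality
    have hXent : ∀ i j, (star U * (hA.1.cfc Real.sqrt - hB.1.cfc Real.sqrt) * V) i j
        = (Real.sqrt (d i) - Real.sqrt (e j)) * W i j := by
      intro i j
      rw [hXmat, Matrix.sub_apply, Matrix.diagonal_mul, Matrix.mul_diagonal]
      ring
    have hDent : ∀ i j, (star U * (A - B) * V) i j = (d i - e j) * W i j := by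
      intro i j
      rw [hDmat, Matrix.sub_apply, Matrix.diagonal_mul, Matrix.mul_diagonal]
      ring
    have hsum : μ * frobSq (hA.1.cfc Real.sqrt - hB.1.cfc Real.sqrt) ≤ frobSq (A - B) := by
      rw [← frobSq_conj (hA.1.cfc Real.sqrt - hB.1.cfc Real.sqrt) hU1 hV1, ← frobSq_conj (A - B) hU1 hV1]
      rw [frobSq, frobSq, Finset.mul_sum]
      refine Finset.sum_le_sum fun i _ => ?_
      rw [Finset.mul_sum]
      refine Finset.sum_le_sum fun j _ => ?_
      rw [hXent i j, hDent i j]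
      exact hentry i j
    -- real-valued inequality
    have hXnn := frobSq_nonneg (hA.1.cfc Real.sqrt - hB.1.cfc Real.sqrt)
    have hreal : frobNorm (hA.1.cfc Real.sqrt - hB.1.cfc Real.sqrt)
        ≤ μ ^ (-(1 / 2 : ℝ)) * frobNorm (A - B) := by
      rw [Real.rpow_neg hμpos.le, ← Real.sqrt_eq_rpow]
      have h4 : frobSq (hA.1.cfc Real.sqrt - hB.1.cfc Real.sqrt) ≤ μ⁻¹ * frobSq (A - B) := by
        rw [le_inv_mul_iff₀ hμpos]
        exact hsum
      rw [frobNorm_eq, frobNorm_eq]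
      calc Real.sqrt (frobSq (hA.1.cfc Real.sqrt - hB.1.cfc Real.sqrt))
          ≤ Real.sqrt (μ⁻¹ * frobSq (A - B)) := Real.sqrt_le_sqrt h4
        _ = (Real.sqrt μ)⁻¹ * Real.sqrt (frobSq (A - B)) := by
            rw [Real.sqrt_mul (inv_nonneg.mpr hμpos.le), Real.sqrt_inv]
    calc ENNReal.ofReal (frobNorm (hA.1.cfc Real.sqrt - hB.1.cfc Real.sqrt))
        ≤ ENNReal.ofReal (μ ^ (-(1 / 2 : ℝ)) * frobNorm (A - B)) :=
          ENNReal.ofReal_le_ofReal hreal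
      _ = ENNReal.ofReal (μ ^ (-(1 / 2 : ℝ))) * ENNReal.ofReal (frobNorm (A - B)) :=
          ENNReal.ofReal_mul (Real.rpow_nonneg hμpos.le _)
      _ = ENNReal.ofReal μ ^ (-(1 / 2 : ℝ)) * ENNReal.ofReal (frobNorm (A - B)) := by
          rw [ENNReal.ofReal_rpow_of_pos hμpos]
      _ ≤ lambdaPlus A ^ (-(1 / 2 : ℝ)) * ENNReal.ofReal (frobNorm (A - B)) := by
          apply mul_le_mul_left
          rw [ENNReal.rpow_neg, ENNReal.rpow_neg]
          exact ENNReal.inv_le_inv.mpr (ENNReal.rpow_le_rpow hL (by norm_num))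
end

section
/- For Gaussian random variables X, Y on R^S with means m_X, m_Y and covariances Σ_X, Σ_Y, there exists a constant c (depending only on p and S) such that W_p(X, Y) ≤ c · (‖m_X − m_Y‖ + ‖√Σ_X − √Σ_Y‖). -/
open MeasureTheory
open scoped BigOperators ENNReal

/-- Euclidean norm of a vector indexed by a finite set. -/
noncomputable def euNorm {S : Type*} [Fintype S] (v : S → ℝ) : ℝ :=
  Real.sqrt (∑ s, v s ^ 2)

/-- The Wasserstein cost of order `p` between two measures on `E`, for a given
cost function `c : E → E → ℝ≥0∞`: the infimum over couplings `π` of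
`(∫ c(x,y)^p dπ)^{1/p}`. -/
noncomputable def Wcost {E : Type*} [MeasurableSpace E] (c : E → E → ℝ≥0∞) (p : ℝ)
    (μ ν : Measure E) : ℝ≥0∞ :=
  ⨅ (π : Measure (E × E)) (_ : π.map Prod.fst = μ ∧ π.map Prod.snd = ν),
    (∫⁻ z, c z.1 z.2 ^ p ∂π) ^ (1 / p)

/-- Euclidean cost on `ℝ^S`. -/
noncomputable def euCost {S : Type*} [Fintype S] (x y : S → ℝ) : ℝ≥0∞ :=
  ENNReal.ofReal (euNorm (x - y))

open scoped ComplexOrder in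
/-- The positive semidefinite square root of a positive semidefinite matrix
(definition of the older Mathlib, restored). -/
noncomputable def Matrix.PosSemidef.sqrt {n 𝕜 : Type*} [Fintype n] [RCLike 𝕜] [DecidableEq n]
    {A : Matrix n n 𝕜} (hA : A.PosSemidef) : Matrix n n 𝕜 :=
  hA.isHermitian.eigenvectorUnitary.1 * Matrix.diagonal ((↑) ∘ (√·) ∘ hA.isHermitian.eigenvalues) *
  (star hA.isHermitian.eigenvectorUnitary : Matrix n n 𝕜)

/-- The standard Gaussian measure on `ℝ^S` (i.i.d. standard normal coordinates). -/
noncomputable def stdGaussianPi (S : Type*) [Fintype S] : Measure (S → ℝ) :=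
  Measure.pi fun _ => ProbabilityTheory.gaussianReal 0 1

/-- The Gaussian measure on `ℝ^S` with mean `m` and covariance `A` (for `A`
positive semidefinite), defined as the law of `m + √A · N` for a standard Gaussian `N`. -/
noncomputable def gaussMeasure {S : Type*} [Fintype S] [DecidableEq S] (m : S → ℝ)
    {A : Matrix S S ℝ} (hA : A.PosSemidef) : Measure (S → ℝ) :=
  (stdGaussianPi S).map (fun x => m + hA.sqrt.mulVec x)

lemma integrable_abs_rpow_mul_gauss {p : ℝ} (hp : 0 ≤ p) :
    MeasureTheory.Integrable (fun t : ℝ => |t| ^ p * Real.exp (-(1/2) * t ^ 2)) := by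
  set n := ⌈p⌉₊ with hn
  have h2n : Integrable (fun t : ℝ => t ^ (2 * n) * Real.exp (-(1/2) * t ^ 2)) := by
    have := integrable_rpow_mul_exp_neg_mul_sq (by norm_num : (0:ℝ) < 1/2)
      (s := ((2 * n : ℕ) : ℝ)) (lt_of_lt_of_le (by norm_num) (Nat.cast_nonneg _))
    exact this.congr (Filter.Eventually.of_forall fun x => by simp only []; rw [Real.rpow_natCast])
  have h1 : Integrable (fun t : ℝ => Real.exp (-(1/2) * t ^ 2)) :=
    integrable_exp_neg_mul_sq (by norm_num)
  have hmaj : Integrable (fun t : ℝ => Real.exp (-(1/2) * t ^ 2) + t ^ (2*n) * Real.exp (-(1/2) * t ^ 2)) := h1.add h2n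
  refine hmaj.mono' ?_ ?_
  · exact ((measurable_id.abs.pow_const p).mul
      (((measurable_id.pow_const 2).const_mul (-(1/2))).exp)).aestronglyMeasurable
  · refine Filter.Eventually.of_forall fun t => ?_
    have he : (0:ℝ) < Real.exp (-(1/2) * t ^ 2) := Real.exp_pos _
    have hb : |t| ^ p ≤ 1 + t ^ (2*n) := by
      have h2nn : (0:ℝ) ≤ t ^ (2*n) := by rw [pow_mul]; positivity
      rcases le_total |t| 1 with h | h
      · have := Real.rpow_le_one (abs_nonneg t) h hp
        linarith
      · have h1' : |t| ^ p ≤ |t| ^ ((2*n : ℕ) : ℝ) :=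
          Real.rpow_le_rpow_of_exponent_le h (by
            push_cast
            have := Nat.le_ceil p
            have : p ≤ (n:ℝ) := this
            linarith [Nat.cast_nonneg (α := ℝ) n])
        rw [Real.rpow_natCast] at h1'
        have : |t| ^ (2*n) = t ^ (2*n) := (even_two_mul n).pow_abs t
        linarith [h1', this ▸ h1']
    rw [norm_mul, Real.norm_eq_abs, Real.norm_eq_abs, abs_of_nonneg he.le,
      abs_of_nonneg (Real.rpow_nonneg (abs_nonneg t) p)]
    calc |t| ^ p * Real.exp (-(1/2) * t ^ 2) ≤ (1 + t ^ (2*n)) * Real.exp (-(1/2) * t ^ 2) := by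
          exact mul_le_mul_of_nonneg_right hb he.le
      _ = _ := by ring

open ProbabilityTheory in
lemma gaussian_moment_lt_top {p : ℝ} (hp : 0 ≤ p) :
    ∫⁻ t, ENNReal.ofReal |t| ^ p ∂(gaussianReal 0 1) < ⊤ := by
  have hmeas : Measurable (fun t : ℝ => ENNReal.ofReal |t| ^ p) :=
    (measurable_id.abs.ennreal_ofReal).pow_const p
  rw [gaussianReal_of_var_ne_zero 0 one_ne_zero,
    lintegral_withDensity_eq_lintegral_mul _ (measurable_gaussianPDF 0 1) hmeas]
  have heq : ∀ t : ℝ, (gaussianPDF 0 1 * fun t => ENNReal.ofReal |t| ^ p) t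
      = ENNReal.ofReal (gaussianPDFReal 0 1 t * |t| ^ p) := by
    intro t
    simp only [Pi.mul_apply, gaussianPDF]
    rw [ENNReal.ofReal_rpow_of_nonneg (abs_nonneg t) hp,
      ← ENNReal.ofReal_mul (gaussianPDFReal_nonneg 0 1 t)]
  simp_rw [heq]
  refine Integrable.lintegral_lt_top ?_
  have : (fun t : ℝ => gaussianPDFReal 0 1 t * |t| ^ p)
      = fun t => (Real.sqrt (2 * Real.pi))⁻¹ * (|t| ^ p * Real.exp (-(1/2) * t ^ 2)) := by
    ext t
    simp only [gaussianPDFReal]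
    push_cast
    rw [mul_one, sub_zero]
    ring_nf
  rw [this]
  exact (integrable_abs_rpow_mul_gauss hp).const_mul _

lemma pi_map_eval {ι : Type*} [Fintype ι] [DecidableEq ι] {α : ι → Type*} [∀ i, MeasurableSpace (α i)]
    (μ : ∀ i, Measure (α i)) [∀ i, IsProbabilityMeasure (μ i)] (i : ι) :
    (Measure.pi μ).map (fun f => f i) = μ i := by
  ext s hs
  rw [Measure.map_apply (measurable_pi_apply i) hs]
  have h1 : (fun f : ∀ j, α j => f i) ⁻¹' s
      = Set.pi Set.univ (Function.update (fun j => Set.univ) i s) := by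
    ext f
    simp only [Set.mem_preimage, Set.mem_pi, Set.mem_univ, true_implies]
    constructor
    · intro hf j
      rcases eq_or_ne j i with rfl | hj
      · simpa using hf
      · simp [Function.update_of_ne hj]
    · intro hf
      have := hf i
      simpa using this
  rw [h1, Measure.pi_pi]
  rw [Finset.prod_eq_single i]
  · simp
  · intro j _ hj
    simp [Function.update_of_ne hj]
  · simp

lemma euNorm_le_sum {S : Type*} [Fintype S] (v : S → ℝ) : euNorm v ≤ ∑ i, |v i| := by
  rw [euNorm, show ∑ s, v s ^ 2 = ∑ s, |v s| ^ 2 by simp [sq_abs]]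
  have h2 : ∑ s, |v s| ^ 2 ≤ (∑ i, |v i|) ^ 2 :=
    Finset.sum_sq_le_sq_sum_of_nonneg fun i _ => abs_nonneg _
  calc Real.sqrt (∑ s, |v s| ^ 2) ≤ Real.sqrt ((∑ i, |v i|) ^ 2) := Real.sqrt_le_sqrt h2
    _ = ∑ i, |v i| := Real.sqrt_sq (Finset.sum_nonneg fun i _ => abs_nonneg _)

open ProbabilityTheory in
lemma stdGaussian_moment_lt_top {S : Type*} [Fintype S] {p : ℝ} (hp : 1 ≤ p) :
    ∫⁻ x, ENNReal.ofReal (euNorm x) ^ p ∂(stdGaussianPi S) < ⊤ := by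
  classical
  have hp0 : 0 < p := lt_of_lt_of_le one_pos hp
  set q : ℝ≥0∞ := ENNReal.ofReal p with hq
  have hq0 : q ≠ 0 := by simp [hq, ENNReal.ofReal_eq_zero]; linarith
  have hqt : q ≠ ⊤ := ENNReal.ofReal_ne_top
  have hqr : q.toReal = p := ENNReal.toReal_ofReal hp0.le
  have hmg : Measurable (fun t : ℝ => ENNReal.ofReal |t| ^ p) :=
    (measurable_id.abs.ennreal_ofReal).pow_const p
  have hcoord : ∀ i : S, MemLp (fun x : S → ℝ => x i) q (stdGaussianPi S) := by
    intro i
    refine ⟨(measurable_pi_apply i).aestronglyMeasurable, ?_⟩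
    rw [eLpNorm_eq_lintegral_rpow_enorm_toReal hq0 hqt, hqr]
    have h1 : ∫⁻ x, ‖x i‖ₑ ^ p ∂(stdGaussianPi S)
        = ∫⁻ t, ENNReal.ofReal |t| ^ p ∂(gaussianReal 0 1) := by
      simp_rw [Real.enorm_eq_ofReal_abs]
      rw [stdGaussianPi]
      calc ∫⁻ x : S → ℝ, ENNReal.ofReal |x i| ^ p ∂(Measure.pi fun _ => gaussianReal 0 1)
          = ∫⁻ t, ENNReal.ofReal |t| ^ p
              ∂((Measure.pi fun _ : S => gaussianReal 0 1).map (fun f => f i)) :=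
            (lintegral_map hmg (measurable_pi_apply i)).symm
        _ = ∫⁻ t, ENNReal.ofReal |t| ^ p ∂(gaussianReal 0 1) := by
            rw [pi_map_eval]
    rw [h1]
    exact ENNReal.rpow_lt_top_of_nonneg (by positivity) (gaussian_moment_lt_top hp0.le).ne
  have hsum : MemLp (fun x : S → ℝ => ∑ i, |x i|) q (stdGaussianPi S) := by
    have : ∀ i : S, MemLp (fun x : S → ℝ => |x i|) q (stdGaussianPi S) := by
      intro i
      simpa [Real.norm_eq_abs] using (hcoord i).norm
    exact memLp_finset_sum Finset.univ (fun i _ => this i)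
  have h2 := hsum.2
  rw [eLpNorm_eq_lintegral_rpow_enorm_toReal hq0 hqt, hqr] at h2
  have h3 : ∫⁻ x, ‖∑ i, |x i|‖ₑ ^ p ∂(stdGaussianPi S) < ⊤ := by
    by_contra h
    rw [not_lt, top_le_iff] at h
    rw [h, ENNReal.top_rpow_of_pos (by positivity)] at h2
    exact absurd h2 (lt_irrefl _)
  refine lt_of_le_of_lt (lintegral_mono fun x => ?_) h3
  refine ENNReal.rpow_le_rpow ?_ hp0.le
  rw [Real.enorm_eq_ofReal_abs]
  exact ENNReal.ofReal_le_ofReal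
    ((euNorm_le_sum x).trans (le_abs_self _))

lemma euNorm_nonneg {S : Type*} [Fintype S] (v : S → ℝ) : 0 ≤ euNorm v :=
  Real.sqrt_nonneg _

lemma euNorm_eq_norm {S : Type*} [Fintype S] (v : S → ℝ) :
    euNorm v = ‖(WithLp.equiv 2 (S → ℝ)).symm v‖ := by
  rw [EuclideanSpace.norm_eq]
  simp [euNorm, Real.norm_eq_abs, sq_abs]

lemma euNorm_add_le {S : Type*} [Fintype S] (u v : S → ℝ) :
    euNorm (u + v) ≤ euNorm u + euNorm v := by
  rw [euNorm_eq_norm, euNorm_eq_norm, euNorm_eq_norm,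
    show (WithLp.equiv 2 (S → ℝ)).symm (u + v) = (WithLp.equiv 2 (S → ℝ)).symm u + (WithLp.equiv 2 (S → ℝ)).symm v from rfl]
  exact norm_add_le _ _

lemma euNorm_mulVec_le {S : Type*} [Fintype S] (M : Matrix S S ℝ) (x : S → ℝ) :
    euNorm (M.mulVec x) ≤ frobNorm M * euNorm x := by
  have h1 : ∀ s : S, (M.mulVec x s) ^ 2 ≤ (∑ t, M s t ^ 2) * (∑ t, x t ^ 2) := by
    intro s
    simpa [Matrix.mulVec, dotProduct] using
      Finset.sum_mul_sq_le_sq_mul_sq Finset.univ (fun t => M s t) x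
  have h2 : ∑ s, (M.mulVec x s) ^ 2 ≤ (∑ s, ∑ t, M s t ^ 2) * (∑ t, x t ^ 2) := by
    rw [Finset.sum_mul]
    exact Finset.sum_le_sum fun s _ => h1 s
  calc euNorm (M.mulVec x) ≤ Real.sqrt ((∑ s, ∑ t, M s t ^ 2) * (∑ t, x t ^ 2)) :=
        Real.sqrt_le_sqrt h2
    _ = frobNorm M * euNorm x := by
        rw [Real.sqrt_mul (by positivity)]; rfl

lemma measurable_mulVec {S : Type*} [Fintype S] (M : Matrix S S ℝ) :
    Measurable fun x : S → ℝ => M.mulVec x :=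
  measurable_pi_lambda _ fun s => by
    simpa [Matrix.mulVec, dotProduct] using
      Finset.measurable_sum Finset.univ (fun t _ => by fun_prop)

lemma measurable_euNorm {S : Type*} [Fintype S] :
    Measurable (euNorm : (S → ℝ) → ℝ) :=
  Real.continuous_sqrt.measurable.comp
    (Finset.measurable_sum Finset.univ fun i _ => (measurable_pi_apply i).pow_const 2)

/-- Wasserstein bound between two Gaussian laws on `ℝ^S`:
`W_p(X, Y) ≤ c (‖m_X − m_Y‖ + ‖√Σ_X − √Σ_Y‖)` for a constant `c` depending only
on `p` and `S`. -/
theorem wasserstein_gaussian_le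
    {S : Type*} [Fintype S] [DecidableEq S] (p : ℝ) (hp : 1 ≤ p) :
    ∃ c : ℝ, 0 ≤ c ∧ ∀ (mX mY : S → ℝ) (SX SY : Matrix S S ℝ)
      (hX : SX.PosSemidef) (hY : SY.PosSemidef),
      Wcost euCost p (gaussMeasure mX hX) (gaussMeasure mY hY)
        ≤ ENNReal.ofReal (c * (euNorm (mX - mY) + frobNorm (hX.sqrt - hY.sqrt))) := by
  classical
  have hp0 : 0 < p := lt_of_lt_of_le one_pos hp
  have hμ : IsProbabilityMeasure (stdGaussianPi S) := by
    rw [stdGaussianPi]; infer_instance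
  set M := ∫⁻ x, ENNReal.ofReal (euNorm x) ^ p ∂(stdGaussianPi S) with hM
  have hMlt : M < ⊤ := stdGaussian_moment_lt_top hp
  have hKt : M ^ (1/p) ≠ ⊤ := (ENNReal.rpow_lt_top_of_nonneg (by positivity) hMlt.ne).ne
  set K := (M ^ (1/p)).toReal with hKdef
  have hK : 0 ≤ K := ENNReal.toReal_nonneg
  refine ⟨1 + K, by linarith, ?_⟩
  intro mX mY SX SY hX hY
  set A := hX.sqrt with hA
  set B := hY.sqrt with hB
  set a := euNorm (mX - mY) with ha'
  set b := frobNorm (A - B) with hb'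
  have ha : 0 ≤ a := Real.sqrt_nonneg _
  have hb : 0 ≤ b := Real.sqrt_nonneg _
  have hmvA : Measurable fun x : S → ℝ => A.mulVec x := measurable_mulVec A
  have hmvB : Measurable fun x : S → ℝ => B.mulVec x := measurable_mulVec B
  set T : (S → ℝ) → (S → ℝ) × (S → ℝ) :=
    fun x => (mX + A.mulVec x, mY + B.mulVec x) with hT'
  have hT : Measurable T := (hmvA.const_add mX).prodMk (hmvB.const_add mY)
  set π := (stdGaussianPi S).map T with hπ
  have h1 : π.map Prod.fst = gaussMeasure mX hX := by
    rw [hπ, Measure.map_map measurable_fst hT]; rfl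
  have h2 : π.map Prod.snd = gaussMeasure mY hY := by
    rw [hπ, Measure.map_map measurable_snd hT]; rfl
  have hcm : Measurable fun z : (S → ℝ) × (S → ℝ) => euCost z.1 z.2 ^ p := by
    have : (fun z : (S → ℝ) × (S → ℝ) => euCost z.1 z.2)
        = fun z => ENNReal.ofReal (euNorm (z.1 - z.2)) := rfl
    exact (((measurable_euNorm.comp
      (measurable_fst.sub measurable_snd)).ennreal_ofReal)).pow_const p
  have hstep1 : Wcost euCost p (gaussMeasure mX hX) (gaussMeasure mY hY)
      ≤ (∫⁻ z, euCost z.1 z.2 ^ p ∂π) ^ (1/p) := by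
    refine (iInf_le _ π).trans ?_
    exact iInf_le _ ⟨h1, h2⟩
  set f : (S → ℝ) → ℝ≥0∞ := fun _ => ENNReal.ofReal a with hf'
  set g : (S → ℝ) → ℝ≥0∞ := fun x => ENNReal.ofReal b * ENNReal.ofReal (euNorm x) with hg'
  have hgm : Measurable g := (measurable_euNorm.ennreal_ofReal).const_mul _
  have hpt : ∀ x : S → ℝ, euCost (T x).1 (T x).2 ≤ f x + g x := by
    intro x
    have hsub : (T x).1 - (T x).2 = (mX - mY) + (A - B).mulVec x := by
      simp only [hT', Matrix.sub_mulVec]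
      ring
    have hle : euNorm ((T x).1 - (T x).2) ≤ a + b * euNorm x := by
      rw [hsub]
      refine (euNorm_add_le _ _).trans ?_
      exact add_le_add (le_refl _) (euNorm_mulVec_le _ _)
    calc euCost (T x).1 (T x).2 = ENNReal.ofReal (euNorm ((T x).1 - (T x).2)) := rfl
      _ ≤ ENNReal.ofReal (a + b * euNorm x) := ENNReal.ofReal_le_ofReal hle
      _ ≤ f x + g x := by
          rw [ENNReal.ofReal_add ha (mul_nonneg hb (euNorm_nonneg x)), ENNReal.ofReal_mul hb]
  have hstep2 : (∫⁻ z, euCost z.1 z.2 ^ p ∂π) ^ (1/p)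
      ≤ (∫⁻ x, (f x + g x) ^ p ∂(stdGaussianPi S)) ^ (1/p) := by
    rw [hπ, lintegral_map hcm hT]
    refine ENNReal.rpow_le_rpow ?_ (by positivity)
    exact lintegral_mono fun x => ENNReal.rpow_le_rpow (hpt x) hp0.le
  have hstep3 : (∫⁻ x, (f x + g x) ^ p ∂(stdGaussianPi S)) ^ (1/p)
      ≤ (∫⁻ x, f x ^ p ∂(stdGaussianPi S)) ^ (1/p)
        + (∫⁻ x, g x ^ p ∂(stdGaussianPi S)) ^ (1/p) := by
    have := ENNReal.lintegral_Lp_add_le (μ := stdGaussianPi S)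
      (f := f) (g := g) measurable_const.aemeasurable hgm.aemeasurable hp
    simpa using this
  have hf_int : (∫⁻ _ : S → ℝ, (ENNReal.ofReal a) ^ p ∂(stdGaussianPi S)) ^ (1/p)
      = ENNReal.ofReal a := by
    rw [lintegral_const, measure_univ, mul_one, ← ENNReal.rpow_mul,
      mul_one_div_cancel hp0.ne', ENNReal.rpow_one]
  have hg_int : (∫⁻ x, g x ^ p ∂(stdGaussianPi S)) ^ (1/p)
      = ENNReal.ofReal b * M ^ (1/p) := by
    have : ∀ x : S → ℝ, g x ^ p
        = ENNReal.ofReal b ^ p * ENNReal.ofReal (euNorm x) ^ p := fun x =>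
      ENNReal.mul_rpow_of_nonneg _ _ hp0.le
    simp_rw [this]
    rw [lintegral_const_mul _ ((measurable_euNorm.ennreal_ofReal).pow_const p), ← hM,
      ENNReal.mul_rpow_of_nonneg _ _ (by positivity : (0:ℝ) ≤ 1/p), ← ENNReal.rpow_mul,
      mul_one_div_cancel hp0.ne', ENNReal.rpow_one]
  have hfinal : ENNReal.ofReal a + ENNReal.ofReal b * M ^ (1/p)
      ≤ ENNReal.ofReal ((1 + K) * (a + b)) := by
    rw [← ENNReal.ofReal_toReal hKt, ← hKdef, ← ENNReal.ofReal_mul hb,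
      ← ENNReal.ofReal_add ha (by positivity)]
    refine ENNReal.ofReal_le_ofReal ?_
    nlinarith [mul_nonneg hK ha, mul_nonneg hK hb]
  calc Wcost euCost p (gaussMeasure mX hX) (gaussMeasure mY hY)
      ≤ (∫⁻ z, euCost z.1 z.2 ^ p ∂π) ^ (1/p) := hstep1
    _ ≤ (∫⁻ x, (f x + g x) ^ p ∂(stdGaussianPi S)) ^ (1/p) := hstep2
    _ ≤ (∫⁻ x, f x ^ p ∂(stdGaussianPi S)) ^ (1/p)
        + (∫⁻ x, g x ^ p ∂(stdGaussianPi S)) ^ (1/p) := hstep3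
    _ = ENNReal.ofReal a + ENNReal.ofReal b * M ^ (1/p) := by rw [hf_int, hg_int]
    _ ≤ ENNReal.ofReal ((1 + K) * (a + b)) := hfinal
end
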